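/- arXiv:2209.12283 — 3 statements merged into one kernel-verified Lean document; each statement's English description precedes it below -/
import Mathlib

section
/- Let P and Q be distinct points of the open unit disk B² and let r ≥ 1 be a real number. Then ‖P/r − Q‖ = (r−1)/r holds if and only if d_F(P,Q) = ln r. -/
/-!
The ray from `P` through `Q` leaves the disk at `B = P + t (Q - P)`, where `t` is the positive
root of the quadratic `‖P + t (Q - P)‖² = 1`; since `‖Q‖ < 1` we have `t > 1`, and the defining
formula of the Funk distance reads `d_F(P, Q) = ln (t / (t - 1)) = ln (‖B - P‖ / ‖B - Q‖)`.
Hence `d_F(P, Q) = ln r` exactly when `Q = P + ((r - 1) / r) (B - P)` for a boundary point `B`,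
i.e. when `Q` lies on the image of the unit circle under the homothety of centre `P` and ratio
`(r - 1) / r`, which is the circle of centre `P / r` and radius `(r - 1) / r`.
-/

/-- The Funk distance on the open unit ball of Euclidean n-space:
`d_F(P,Q) = ln((√k − ⟨P, Q−P⟩)/(√k − ⟨Q, Q−P⟩))` with
`k = ⟨P, Q−P⟩² + (1 − ‖P‖²)‖Q−P‖²`. -/
noncomputable def funkDist {n : ℕ} (P Q : EuclideanSpace ℝ (Fin n)) : ℝ :=
  Real.log
    ((Real.sqrt ((inner ℝ P (Q - P) : ℝ) ^ 2 + (1 - ‖P‖ ^ 2) * ‖Q - P‖ ^ 2) - (inner ℝ P (Q - P) : ℝ)) /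
     (Real.sqrt ((inner ℝ P (Q - P) : ℝ) ^ 2 + (1 - ‖P‖ ^ 2) * ‖Q - P‖ ^ 2) - (inner ℝ Q (Q - P) : ℝ)))

/-- `ρ(ε,η) = (1 + sgn(ε−η)·ε)/(1 + sgn(ε−η)·η)`. -/
noncomputable def rho (ε η : ℝ) : ℝ :=
  (1 + Real.sign (ε - η) * ε) / (1 + Real.sign (ε - η) * η)

/-- The point `(a,b)` of the Euclidean plane. -/
def pt (a b : ℝ) : EuclideanSpace ℝ (Fin 2) := !₂[a, b]

open Real RealInnerProductSpace

section ExitParam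

variable {E : Type*} [NormedAddCommGroup E] [InnerProductSpace ℝ E]

/-- The quantity `k` of the Funk distance: the reduced discriminant of `s ↦ ‖P + s v‖² - 1`. -/
noncomputable def funkDisc (P v : E) : ℝ := ⟪P, v⟫ ^ 2 + (1 - ‖P‖ ^ 2) * ‖v‖ ^ 2

noncomputable def exitParam (P v : E) : ℝ := (√(funkDisc P v) - ⟪P, v⟫) / ‖v‖ ^ 2

theorem sq_norm_mul_norm_add_smul_sq_sub_one (P v : E) (s : ℝ) :
    ‖v‖ ^ 2 * (‖P + s • v‖ ^ 2 - 1) = (‖v‖ ^ 2 * s + ⟪P, v⟫) ^ 2 - funkDisc P v := by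
  rw [norm_add_sq_real, inner_smul_right, norm_smul, mul_pow, norm_eq_abs, sq_abs, funkDisc]
  ring

variable {P v : E}

theorem sq_inner_lt_funkDisc (hP : ‖P‖ < 1) (hv : v ≠ 0) : ⟪P, v⟫ ^ 2 < funkDisc P v := by
  have : 0 < (1 - ‖P‖ ^ 2) * ‖v‖ ^ 2 := by
    have : ‖P‖ ^ 2 < 1 := pow_lt_one₀ (norm_nonneg P) hP two_ne_zero
    have : 0 < ‖v‖ := norm_pos_iff.2 hv
    positivity
  rw [funkDisc]
  linarith

theorem norm_add_smul_eq_one_iff (hP : ‖P‖ < 1) (hv : v ≠ 0) {s : ℝ} (hs : 0 ≤ s) :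
    ‖P + s • v‖ = 1 ↔ s = exitParam P v := by
  have hv2 : 0 < ‖v‖ ^ 2 := by have := norm_pos_iff.2 hv; positivity
  have hk := sq_inner_lt_funkDisc hP hv
  have hlow : -√(funkDisc P v) < ‖v‖ ^ 2 * s + ⟪P, v⟫ := by
    have := neg_sqrt_lt_of_sq_lt hk
    nlinarith
  calc ‖P + s • v‖ = 1 ↔ ‖v‖ ^ 2 * (‖P + s • v‖ ^ 2 - 1) = 0 := by
        rw [mul_eq_zero, sub_eq_zero, pow_eq_one_iff_of_nonneg (norm_nonneg _) two_ne_zero]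
        simp [hv2.ne']
    _ ↔ (‖v‖ ^ 2 * s + ⟪P, v⟫) ^ 2 = √(funkDisc P v) ^ 2 := by
        rw [sq_norm_mul_norm_add_smul_sq_sub_one, sq_sqrt ((sq_nonneg _).trans hk.le), sub_eq_zero]
    _ ↔ ‖v‖ ^ 2 * s + ⟪P, v⟫ = √(funkDisc P v) := by
        rw [sq_eq_sq_iff_eq_or_eq_neg, or_iff_left (by linarith)]
    _ ↔ s = exitParam P v := by
        rw [exitParam, eq_div_iff hv2.ne']
        constructor <;> intro h <;> linarith

theorem lt_exitParam (hv : v ≠ 0) {s : ℝ} (h : ‖P + s • v‖ < 1) : s < exitParam P v := by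
  have hv2 : 0 < ‖v‖ ^ 2 := by have := norm_pos_iff.2 hv; positivity
  have hsq : (‖v‖ ^ 2 * s + ⟪P, v⟫) ^ 2 < funkDisc P v := by
    have : ‖P + s • v‖ ^ 2 < 1 := pow_lt_one₀ (norm_nonneg _) h two_ne_zero
    have := sq_norm_mul_norm_add_smul_sq_sub_one P v s
    nlinarith
  rw [exitParam, lt_div_iff₀ hv2]
  linarith [lt_sqrt_of_sq_lt hsq]

end ExitParam

theorem funkDist_eq_log_exitParam {n : ℕ} {P Q : EuclideanSpace ℝ (Fin n)} (hPQ : P ≠ Q) :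
    funkDist P Q = log (exitParam P (Q - P) / (exitParam P (Q - P) - 1)) := by
  have hv2 : ‖Q - P‖ ^ 2 ≠ 0 := by
    have := norm_pos_iff.2 (sub_ne_zero.2 hPQ.symm); positivity
  have hQ : ⟪Q, Q - P⟫ = ⟪P, Q - P⟫ + ‖Q - P‖ ^ 2 := by
    rw [← real_inner_self_eq_norm_sq, ← inner_add_left, add_sub_cancel]
  rw [funkDist, hQ, ← sub_sub, exitParam, funkDisc, div_sub_one hv2,
    div_div_div_cancel_right₀ hv2]

theorem norm_one_div_smul_sub_eq {E : Type*} [NormedAddCommGroup E] [NormedSpace ℝ E]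
    (P Q : E) {r : ℝ} (hr : 1 < r) :
    ‖(1 / r) • P - Q‖ = (r - 1) / r * ‖P + (r / (r - 1)) • (Q - P)‖ := by
  have hr0 : 0 < r := zero_lt_one.trans hr
  have hcancel : (r - 1) / r * (r / (r - 1)) = 1 := by
    field_simp [(sub_pos.2 hr).ne']
  rw [← abs_of_pos (by positivity : 0 < (r - 1) / r), ← norm_eq_abs, ← norm_smul, norm_sub_rev,
    smul_add, smul_smul, hcancel, one_smul, sub_div, div_self hr0.ne', sub_smul, one_smul]
  congr 1
  abel

/-- For distinct points `P, Q` of the open unit disk and `r ≥ 1`,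
`‖P/r − Q‖ = (r−1)/r` iff `d_F(P,Q) = ln r`. -/
theorem funk_parabola_stmt0 (P Q : EuclideanSpace ℝ (Fin 2))
    (hP : ‖P‖ < 1) (hQ : ‖Q‖ < 1) (hPQ : P ≠ Q) (r : ℝ) (hr : 1 ≤ r) :
    ‖(1 / r) • P - Q‖ = (r - 1) / r ↔ funkDist P Q = Real.log r := by
  have hv : Q - P ≠ 0 := sub_ne_zero.2 hPQ.symm
  have ht : 1 < exitParam P (Q - P) := lt_exitParam hv (by simpa using hQ)
  have hratio : 1 < exitParam P (Q - P) / (exitParam P (Q - P) - 1) :=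
    (one_lt_div (by linarith)).2 (by linarith)
  rw [funkDist_eq_log_exitParam hPQ]
  rcases hr.eq_or_lt with rfl | hr
  · simpa [sub_eq_zero, hPQ] using (log_pos hratio).ne'
  rw [norm_one_div_smul_sub_eq P Q hr, mul_eq_left₀ (by positivity),
    norm_add_smul_eq_one_iff hP hv (by positivity),
    log_injOn_pos.eq_iff (zero_lt_one.trans hratio) (zero_lt_one.trans hr), div_eq_iff (sub_pos.2 hr).ne', div_eq_iff (sub_pos.2 ht).ne']
  constructor <;> intro h <;> linarith
end

section
/- Funk parabola of type 2 through the origin: let y₀ ∈ (−1,1) and F = (f₀,g₀) ∈ B² with g₀ ≠ y₀ and F ≠ (0,0). Then the origin belongs to the Funk parabola of type 2, i.e. d_F((0,0),F) = ln ρ(0,y₀), if and only if f₀² + g₀² = y₀²; that is, if and only if the Euclidean distances from F and from the line s: y = y₀ to the origin coincide. -/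
/-! Seen from the origin, the Funk metric is `d_F(0,Q) = -ln(1 - ‖Q‖)`, and `ρ(0,y₀) = 1/(1 - |y₀|)`,
so the origin is on the parabola iff `‖F‖ = |y₀|`, since `t ↦ -ln(1 - t)` is injective on `t < 1`. -/

theorem funkDist_zero_left {n : ℕ} (Q : EuclideanSpace ℝ (Fin n)) :
    funkDist 0 Q = -Real.log (1 - ‖Q‖) := by
  rcases eq_or_ne Q 0 with rfl | hQ
  · -- both sides are `0`: the left one as `log (0 / 0) = log 0`
    simp [funkDist]
  have hnorm : 0 < ‖Q‖ := norm_pos_iff.mpr hQ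
  rw [funkDist, ← Real.log_inv]
  simp only [inner_zero_left, sub_zero, norm_zero, real_inner_self_eq_norm_sq]
  rw [show (0 : ℝ) ^ 2 + (1 - 0 ^ 2) * ‖Q‖ ^ 2 = ‖Q‖ ^ 2 by ring, Real.sqrt_sq hnorm.le,
    show ‖Q‖ - ‖Q‖ ^ 2 = ‖Q‖ * (1 - ‖Q‖) by ring, div_mul_cancel_left₀ hnorm.ne']

theorem rho_zero_left (η : ℝ) : rho 0 η = (1 - |η|)⁻¹ := by
  rcases lt_trichotomy η 0 with h | rfl | h
  · rw [rho, zero_sub, Real.sign_of_pos (neg_pos.mpr h), abs_of_neg h]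
    simp [sub_neg_eq_add, add_comm]
  · simp [rho]
  · rw [rho, zero_sub, Real.sign_of_neg (neg_neg_iff_pos.mpr h), abs_of_pos h]
    simp [sub_eq_add_neg]

theorem pt_zero_zero : pt 0 0 = 0 := by
  ext i; fin_cases i <;> rfl

theorem norm_pt_sq (a b : ℝ) : ‖pt a b‖ ^ 2 = a ^ 2 + b ^ 2 := by
  simp [pt, EuclideanSpace.norm_eq, Fin.sum_univ_two, Real.sq_sqrt (by positivity : 0 ≤ a ^ 2 + b ^ 2)]

theorem neg_log_one_sub_injOn : Set.InjOn (fun t : ℝ => -Real.log (1 - t)) (Set.Iio 1) := by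
  intro s hs t ht hst
  have := Real.log_injOn_pos (sub_pos.mpr (Set.mem_Iio.mp hs) :)
    (sub_pos.mpr (Set.mem_Iio.mp ht) :) (neg_inj.mp hst)
  linarith

theorem funk_parabola_stmt14_general (y₀ f₀ g₀ : ℝ)
    (hy₀ : -1 < y₀ ∧ y₀ < 1) (hF : ‖pt f₀ g₀‖ < 1) :
    funkDist (pt 0 0) (pt f₀ g₀) = Real.log (rho 0 y₀) ↔ f₀ ^ 2 + g₀ ^ 2 = y₀ ^ 2 := by
  have hy : |y₀| < 1 := abs_lt.mpr hy₀
  rw [pt_zero_zero, funkDist_zero_left, rho_zero_left, Real.log_inv, ← norm_pt_sq, ← sq_abs y₀,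
    sq_eq_sq₀ (norm_nonneg _) (abs_nonneg _)]
  exact neg_log_one_sub_injOn.eq_iff hF hy

/-- The origin lies on the type-2 Funk parabola with focus `F = (f₀,g₀)` and directrix
`y = y₀` iff `f₀² + g₀² = y₀²`, i.e. iff the Euclidean distances from `F` and from the
directrix to the origin coincide. -/
theorem funk_parabola_stmt14 (y₀ f₀ g₀ : ℝ)
    (hy₀ : -1 < y₀ ∧ y₀ < 1) (hF : ‖pt f₀ g₀‖ < 1) (hgy : g₀ ≠ y₀)
    (hFne : pt f₀ g₀ ≠ pt 0 0) :
    funkDist (pt 0 0) (pt f₀ g₀) = Real.log (rho 0 y₀) ↔ f₀ ^ 2 + g₀ ^ 2 = y₀ ^ 2 :=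
  funk_parabola_stmt14_general y₀ f₀ g₀ hy₀ hF
end

section
/- Irreducibility of the quartic defining the Funk parabolas of types 3 and 4: let a, b, c, d be real numbers with c ≠ 0 and d ≠ 0. Then the two-variable polynomial Y⁴ + X²Y² − 2Y³ + a·Y² + b·XY + c·Y + d is irreducible in the polynomial ring ℝ[X,Y]; in particular it admits no factorization as a product of two quadratic polynomials nor as a product of a cubic and a linear polynomial in X and Y. -/
/-!
Viewed as a monic quartic in `Y` over `ℝ[X]`, the polynomial could only split off a monic factor
of degree 1 or 2 in `Y`, and both are excluded by the fact that `p² + X²` has degree at least 2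
for every `p` over an ordered ring. A root `r ∈ ℝ[X]` is nonzero since `d ≠ 0` and satisfies
`r² ((r - 1)² + X² + a - 1) = -((bX + c) r + d)`, whose left side has degree `≥ 2 deg r + 2`.
A factorization `(Y² + uY + v)(Y² + wY + z)` forces `vz = d`, so `v, z` are constants, and
`u + w = -2`, `uw = X² + a - v - z`, whence `(u + 1)² + X²` would be constant.
-/

namespace MvPolynomial

variable (R : Type*) [CommSemiring R]

noncomputable def finTwoAlgEquiv : MvPolynomial (Fin 2) R ≃ₐ[R] Polynomial (Polynomial R) :=
  (renameEquiv R (Equiv.swap 0 1)).trans <|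
    (finSuccEquiv R 1).trans (Polynomial.mapAlgEquiv (uniqueAlgEquiv R (Fin 1)))

variable {R}

@[simp]
theorem finTwoAlgEquiv_X_zero : finTwoAlgEquiv R (X 0) = Polynomial.C Polynomial.X := by
  have h := finSuccEquiv_X_succ (R := R) (j := (0 : Fin 1))
  simp only [Fin.succ_zero_eq_one] at h
  simp [finTwoAlgEquiv, h]

@[simp]
theorem finTwoAlgEquiv_X_one : finTwoAlgEquiv R (X 1) = Polynomial.X := by
  simp [finTwoAlgEquiv, finSuccEquiv_X_zero]

@[simp]
theorem finTwoAlgEquiv_C (r : R) : finTwoAlgEquiv R (C r) = Polynomial.C (Polynomial.C r) := by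
  rw [← algebraMap_eq, AlgEquiv.commutes, Polynomial.algebraMap_apply, Polynomial.algebraMap_eq]

end MvPolynomial

namespace Polynomial

section CommRing

variable {R : Type*} [CommRing R]

theorem quadratic_mul_quadratic (u v w z : R) :
    (X ^ 2 + C u * X + C v) * (X ^ 2 + C w * X + C z) =
      X ^ 4 + C (u + w) * X ^ 3 + C (v + u * w + z) * X ^ 2 + C (u * z + v * w) * X
        + C (v * z) := by
  simp only [map_add, map_mul]
  ring

/-- The quartic `Y⁴ + X²Y² - 2Y³ + aY² + bXY + cY + d` with `Y` the outer variable. -/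
noncomputable def funkQuartic (a b c d : R) : R[X][X] :=
  X ^ 4 - 2 * X ^ 3 + C (X ^ 2 + C a) * X ^ 2 + C (C b * X + C c) * X + C (C d)

theorem natDegree_funkQuartic [Nontrivial R] (a b c d : R) :
    (funkQuartic a b c d).natDegree = 4 := by
  unfold funkQuartic; compute_degree!

theorem monic_funkQuartic (a b c d : R) : (funkQuartic a b c d).Monic := by
  unfold funkQuartic; monicity!

end CommRing

variable {R : Type*} [CommRing R] [LinearOrder R] [IsStrictOrderedRing R]

theorem two_le_natDegree_sq_add_X_sq_add_C (p : R[X]) (e : R) :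
    2 ≤ (p ^ 2 + X ^ 2 + C e).natDegree := by
  rw [natDegree_add_C]
  rcases le_or_gt p.natDegree 1 with hp | hp
  · have hcoeff : (p ^ 2 + X ^ 2).coeff 2 = p.coeff 1 ^ 2 + 1 := by
      rw [coeff_add, coeff_X_pow_self, coeff_pow_of_natDegree_le hp]
    exact le_natDegree_of_ne_zero (hcoeff ▸ by positivity)
  · have hX : (X ^ 2 : R[X]).natDegree < (p ^ 2).natDegree := by
      rw [natDegree_X_pow, natDegree_pow]; omega
    rw [natDegree_add_eq_left_of_natDegree_lt hX, natDegree_pow]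
    omega

variable (a b c : R) {d : R}

theorem not_isRoot_funkQuartic (hd : d ≠ 0) (r : R[X]) : ¬ (funkQuartic a b c d).IsRoot r := by
  intro h
  have heval : r ^ 4 - 2 * r ^ 3 + (X ^ 2 + C a) * r ^ 2 + (C b * X + C c) * r + C d = 0 := by
    simpa [funkQuartic] using h
  have hr : r ≠ 0 := by
    rintro rfl
    exact hd (by simpa using heval)
  have hfactor : r ^ 2 * ((r - 1) ^ 2 + X ^ 2 + C (a - 1)) = -((C b * X + C c) * r + C d) := by
    rw [C_sub, C_1]
    linear_combination heval
  have hq := two_le_natDegree_sq_add_X_sq_add_C (r - 1) (a - 1)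
  have hq0 : (r - 1) ^ 2 + X ^ 2 + C (a - 1) ≠ 0 := by
    rintro h0
    rw [h0, natDegree_zero] at hq
    omega
  have hlin : ((C b * X + C c) * r + C d).natDegree ≤ 1 + r.natDegree := by
    rw [natDegree_add_C]
    exact natDegree_mul_le.trans (by grw [natDegree_linear_le])
  have := congrArg natDegree hfactor
  rw [natDegree_mul (pow_ne_zero 2 hr) hq0, natDegree_pow, natDegree_neg] at this
  omega

theorem quadratic_mul_quadratic_ne_funkQuartic (hd : d ≠ 0) (u v w z : R[X]) :
    (X ^ 2 + C u * X + C v) * (X ^ 2 + C w * X + C z) ≠ funkQuartic a b c d := by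
  intro h
  rw [quadratic_mul_quadratic, funkQuartic] at h
  have hcoeff (n : ℕ) := congrArg (coeff · n) h
  simp only [coeff_add, coeff_sub, coeff_C_mul, coeff_X_pow, coeff_X, coeff_C,
    coeff_ofNat_mul] at hcoeff
  have h0 : v * z = C d := by simpa using hcoeff 0
  have h2 : v + u * w + z = X ^ 2 + C a := by simpa using hcoeff 2
  have h3 : u + w = -2 := by simpa using hcoeff 3
  obtain ⟨hv, hz⟩ : v.natDegree = 0 ∧ z.natDegree = 0 := by
    have hvz : v * z ≠ 0 := by simpa [h0] using hd
    have := natDegree_mul (left_ne_zero_of_mul hvz) (right_ne_zero_of_mul hvz)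
    rw [h0, natDegree_C] at this
    omega
  rw [eq_C_of_natDegree_eq_zero hv, eq_C_of_natDegree_eq_zero hz] at h2
  have hsq : (u + 1) ^ 2 + X ^ 2 + C (a - v.coeff 0 - z.coeff 0 - 1) = 0 := by
    rw [C_sub, C_sub, C_sub, C_1]
    linear_combination u * h3 - h2
  have := two_le_natDegree_sq_add_X_sq_add_C (u + 1) (a - v.coeff 0 - z.coeff 0 - 1)
  rw [hsq, natDegree_zero] at this
  omega

theorem irreducible_funkQuartic (hd : d ≠ 0) : Irreducible (funkQuartic a b c d) := by
  rw [(monic_funkQuartic a b c d).irreducible_iff_natDegree', natDegree_funkQuartic]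
  refine ⟨fun h => by simpa [h] using natDegree_funkQuartic a b c d, ?_⟩
  intro f g hf hg hfg hdeg
  rw [Finset.mem_Ioc] at hdeg
  obtain hg1 | hg2 : g.natDegree = 1 ∨ g.natDegree = 2 := by omega
  · obtain ⟨r, rfl⟩ := isMonicOfDegree_one_iff.mp ⟨hg1, hg⟩
    refine not_isRoot_funkQuartic a b c hd (-r) ?_
    simp [← hfg]
  · have hf2 : f.natDegree = 2 := by
      have := hf.natDegree_mul hg
      rw [hfg, natDegree_funkQuartic] at this
      omega
    obtain ⟨u, v, rfl⟩ := isMonicOfDegree_two_iff.mp ⟨hf2, hf⟩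
    obtain ⟨w, z, rfl⟩ := isMonicOfDegree_two_iff.mp ⟨hg2, hg⟩
    exact quadratic_mul_quadratic_ne_funkQuartic a b c hd u v w z hfg

end Polynomial

open MvPolynomial

theorem funk_parabola_stmt17_general (a b c d : ℝ) (hd : d ≠ 0) :
    Irreducible
      ((X 1) ^ 4 + (X 0) ^ 2 * (X 1) ^ 2 - 2 * (X 1) ^ 3 + C a * (X 1) ^ 2
        + C b * (X 0) * (X 1) + C c * (X 1) + C d : MvPolynomial (Fin 2) ℝ) := by
  rw [← MulEquiv.irreducible_iff (finTwoAlgEquiv ℝ)]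
  convert Polynomial.irreducible_funkQuartic a b c hd using 1
  simp only [map_add, map_sub, map_mul, map_pow, map_ofNat, finTwoAlgEquiv_X_zero,
    finTwoAlgEquiv_X_one, finTwoAlgEquiv_C, Polynomial.funkQuartic]
  ring

/-- Irreducibility of the quartic defining the Funk parabolas of types 3 and 4:
for real `a, b, c, d` with `c ≠ 0` and `d ≠ 0`, the polynomial
`Y⁴ + X²Y² − 2Y³ + aY² + bXY + cY + d` is irreducible in `ℝ[X,Y]`
(here `X = MvPolynomial.X 0`, `Y = MvPolynomial.X 1`); in particular it is neither a
product of two quadratics nor a product of a cubic and a linear polynomial. -/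
theorem funk_parabola_stmt17 (a b c d : ℝ) (hc : c ≠ 0) (hd : d ≠ 0) :
    Irreducible
      ((X 1) ^ 4 + (X 0) ^ 2 * (X 1) ^ 2 - 2 * (X 1) ^ 3 + C a * (X 1) ^ 2
        + C b * (X 0) * (X 1) + C c * (X 1) + C d : MvPolynomial (Fin 2) ℝ) :=
  funk_parabola_stmt17_general a b c d hd
end
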